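/- Let Φ : M_d(ℂ) → M_{d'}(ℂ) and Ω : M_e(ℂ) → M_{e'}(ℂ) be completely positive linear maps, and suppose Φ satisfies: Tr Φ(E_{ik})† Φ(E_{jℓ}) is a nonnegative real number for all indices i, j, k, ℓ, where E_{jk} are the matrix units of M_d(ℂ). Then ν₂(Φ ⊗ Ω) = ν₂(Φ) · ν₂(Ω). -/

import Mathlib

open scoped Kronecker ComplexOrder
open Matrix

/-- Frobenius (Hilbert–Schmidt) norm ‖A‖₂ = (Tr A†A)^{1/2}. -/
noncomputable def frob {m n : Type*} [Fintype m] [Fintype n] (A : Matrix m n ℂ) : ℝ :=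
  Real.sqrt ((Aᴴ * A).trace.re)

/-- ‖Φ‖_{2→2} = sup_{A ≠ 0} ‖Φ(A)‖₂ / ‖A‖₂. -/
noncomputable def norm22 {m m' : Type*} [Fintype m] [Fintype m']
    (Φ : Matrix m m ℂ →ₗ[ℂ] Matrix m' m' ℂ) : ℝ :=
  sSup {r | ∃ A, A ≠ 0 ∧ r = frob (Φ A) / frob A}

/-- Choi matrix ∑_{j,k} E_{jk} ⊗ Φ(E_{jk}) of a linear map between matrix algebras. -/
noncomputable def choi {m m' : Type*} [Fintype m] [DecidableEq m] [Fintype m']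
    (Φ : Matrix m m ℂ →ₗ[ℂ] Matrix m' m' ℂ) : Matrix (m × m') (m × m') ℂ :=
  ∑ j, ∑ k, (single j k (1 : ℂ)) ⊗ₖ Φ (single j k 1)

/-- A linear map between matrix algebras is completely positive iff its Choi matrix is
positive semidefinite. -/
def IsCPMap {m m' : Type*} [Fintype m] [DecidableEq m] [Fintype m']
    (Φ : Matrix m m ℂ →ₗ[ℂ] Matrix m' m' ℂ) : Prop :=
  (choi Φ).PosSemidef

/-- Schatten p-norm ‖A‖_p = (Tr |A|^p)^{1/p}, computed through the singular values of A,
i.e. the square roots of the eigenvalues of A†A. -/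
noncomputable def schatten {m n : Type*} [Fintype m] [Fintype n] [DecidableEq n]
    (p : ℝ) (A : Matrix m n ℂ) : ℝ :=
  (∑ i, Real.sqrt ((isHermitian_conjTranspose_mul_self A).eigenvalues i) ^ p) ^ (1 / p)

/-- ν₂(Φ) = sup { ‖Φ(ρ)‖₂ : ρ positive semidefinite, Tr ρ = 1 }. -/
noncomputable def nu2 {m m' : Type*} [Fintype m] [Fintype m']
    (Φ : Matrix m m ℂ →ₗ[ℂ] Matrix m' m' ℂ) : ℝ :=
  sSup {r | ∃ ρ : Matrix m m ℂ, ρ.PosSemidef ∧ ρ.trace = 1 ∧ r = frob (Φ ρ)}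

/-- ν_p(Φ) = sup { ‖Φ(ρ)‖_p : ρ positive semidefinite, Tr ρ = 1 }. -/
noncomputable def nup (p : ℝ) {m m' : Type*} [Fintype m] [Fintype m'] [DecidableEq m']
    (Φ : Matrix m m ℂ →ₗ[ℂ] Matrix m' m' ℂ) : ℝ :=
  sSup {r | ∃ ρ : Matrix m m ℂ, ρ.PosSemidef ∧ ρ.trace = 1 ∧ r = schatten p (Φ ρ)}

/-- The Pauli matrices σ₁, σ₂, σ₃ (indexed by `Fin 3`). -/
noncomputable def pauli : Fin 3 → Matrix (Fin 2) (Fin 2) ℂ :=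
  ![!![0, 1; 1, 0], !![0, -Complex.I; Complex.I, 0], !![1, 0; 0, -1]]

open scoped MatrixOrder Matrix.Norms.L2Operator in
lemma psd_exists_eq {m : Type*} [Fintype m] {A : Matrix m m ℂ}
    (h : A.PosSemidef) : ∃ B : Matrix m m ℂ, A = Bᴴ * B := by
  classical
  obtain ⟨B, rfl⟩ := CStarAlgebra.nonneg_iff_eq_star_mul_self.mp h.nonneg
  exact ⟨B, rfl⟩

namespace Frob
variable {m n p q : Type*} [Fintype m] [Fintype n] [Fintype p] [Fintype q]

noncomputable def toE (A : Matrix m n ℂ) : EuclideanSpace ℂ (m × n) :=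
  WithLp.toLp 2 (fun x : m × n => A x.1 x.2)

lemma inn_eq (A B : Matrix m n ℂ) :
    (Aᴴ * B).trace = (inner ℂ (toE A) (toE B) : ℂ) := by
  simp only [trace, Matrix.mul_apply, diag, conjTranspose_apply, PiLp.inner_apply,
    RCLike.inner_apply, toE]
  rw [Finset.sum_comm, ← Finset.sum_product']
  exact Finset.sum_congr rfl fun _ _ => mul_comm _ _

lemma frob_eq (A : Matrix m n ℂ) : frob A = ‖toE A‖ := by
  have h : ((inner ℂ (toE A) (toE A) : ℂ)).re = ‖toE A‖ ^ 2 := by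
    rw [← RCLike.re_to_complex]; exact inner_self_eq_norm_sq (toE A)
  rw [frob, inn_eq, h, Real.sqrt_sq (norm_nonneg _)]

lemma frob_nonneg (A : Matrix m n ℂ) : 0 ≤ frob A := Real.sqrt_nonneg _

lemma inn_self (A : Matrix m n ℂ) : (Aᴴ * A).trace = ((frob A ^ 2 : ℝ) : ℂ) := by
  rw [inn_eq, inner_self_eq_norm_sq_to_K, frob_eq]
  norm_cast

lemma frob_sq (A : Matrix m n ℂ) : frob A ^ 2 = (Aᴴ * A).trace.re := by
  rw [inn_self, Complex.ofReal_re]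

lemma cs (A B : Matrix m n ℂ) : ‖(Aᴴ * B).trace‖ ≤ frob A * frob B := by
  rw [inn_eq, frob_eq, frob_eq]; exact norm_inner_le_norm _ _

lemma inn_kron (A C : Matrix m n ℂ) (B D : Matrix p q ℂ) :
    ((A ⊗ₖ B)ᴴ * (C ⊗ₖ D)).trace = (Aᴴ * C).trace * (Bᴴ * D).trace := by
  simp only [trace, diag, Matrix.mul_apply, conjTranspose_apply, kroneckerMap_apply,
    Fintype.sum_prod_type, star_mul']
  rw [Finset.sum_mul_sum]
  refine Finset.sum_congr rfl fun x _ => Finset.sum_congr rfl fun y _ => ?_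
  rw [Finset.sum_mul_sum]
  exact Finset.sum_congr rfl fun i _ => Finset.sum_congr rfl fun a _ => by ring


lemma frob_kron (A : Matrix m n ℂ) (B : Matrix p q ℂ) :
    frob (A ⊗ₖ B) = frob A * frob B := by
  rw [frob, inn_kron, inn_self, inn_self, ← Complex.ofReal_mul]
  rw [Complex.ofReal_re, ← mul_pow]
  exact Real.sqrt_sq (mul_nonneg (frob_nonneg A) (frob_nonneg B))

lemma frob_smul (c : ℂ) (A : Matrix m n ℂ) : frob (c • A) = ‖c‖ * frob A := by
  rw [frob_eq, frob_eq]
  have : toE (c • A) = c • toE A := rfl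
  rw [this, norm_smul]

lemma frob_AAH (A : Matrix m n ℂ) : frob (A * Aᴴ) = frob (Aᴴ * A) := by
  have h1 : ((A * Aᴴ)ᴴ * (A * Aᴴ)).trace = ((Aᴴ * A)ᴴ * (Aᴴ * A)).trace := by
    simp only [conjTranspose_mul, conjTranspose_conjTranspose, Matrix.mul_assoc]
    rw [Matrix.trace_mul_comm]
    simp only [Matrix.mul_assoc]
  rw [frob, frob, h1]

lemma key (A : Matrix m n ℂ) (B : Matrix m p ℂ) :
    frob (Aᴴ * B) ^ 2 ≤ frob (Aᴴ * A) * frob (Bᴴ * B) := by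
  have h1 : ((Aᴴ * B)ᴴ * (Aᴴ * B)).trace = ((A * Aᴴ)ᴴ * (B * Bᴴ)).trace := by
    simp only [conjTranspose_mul, conjTranspose_conjTranspose, Matrix.mul_assoc]
    rw [Matrix.trace_mul_comm]
    simp only [Matrix.mul_assoc]
  calc frob (Aᴴ * B) ^ 2 = ((A * Aᴴ)ᴴ * (B * Bᴴ)).trace.re := by rw [frob_sq, h1]
    _ ≤ ‖((A * Aᴴ)ᴴ * (B * Bᴴ)).trace‖ := Complex.re_le_norm _
    _ ≤ frob (A * Aᴴ) * frob (B * Bᴴ) := cs _ _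
    _ = frob (Aᴴ * A) * frob (Bᴴ * B) := by rw [frob_AAH, frob_AAH]

end Frob

namespace CPH
variable {m m' : Type*} [Fintype m] [DecidableEq m] [Fintype m']

lemma nonneg_re {z : ℂ} (h : 0 ≤ z) : z = (z.re : ℂ) := by
  rw [Complex.le_def] at h
  exact Complex.ext rfl (by simpa using h.2.symm)

lemma nonneg_re' {z : ℂ} (h : 0 ≤ z) : 0 ≤ z.re := by
  rw [Complex.le_def] at h; simpa using h.1

lemma psd_smul {A : Matrix m m ℂ} (h : A.PosSemidef) {c : ℝ} (hc : 0 ≤ c) :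
    ((c : ℂ) • A).PosSemidef := by
  obtain ⟨B, rfl⟩ := psd_exists_eq h
  have : ((c:ℂ) • (Bᴴ * B)) = ((Real.sqrt c : ℂ) • B)ᴴ * ((Real.sqrt c : ℂ) • B) := by
    rw [conjTranspose_smul, Matrix.smul_mul, Matrix.mul_smul, smul_smul]
    congr 1
    rw [Complex.star_def, Complex.conj_ofReal, ← Complex.ofReal_mul,
      Real.mul_self_sqrt hc]
  rw [this]; exact posSemidef_conjTranspose_mul_self _

lemma choi_apply (Φ : Matrix m m ℂ →ₗ[ℂ] Matrix m' m' ℂ) (j k : m) (a b : m') :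
    choi Φ (j, a) (k, b) = Φ (Matrix.single j k 1) a b := by
  simp only [choi, Matrix.sum_apply, kroneckerMap_apply]
  rw [Finset.sum_eq_single j, Finset.sum_eq_single k]
  · simp [Matrix.single]
  · intro k' _ hk; simp [Matrix.single, hk]
  · simp
  · intro j' _ hj
    apply Finset.sum_eq_zero; intro k' _
    simp [Matrix.single, hj]
  · simp

lemma map_eq_sum (Φ : Matrix m m ℂ →ₗ[ℂ] Matrix m' m' ℂ) (X : Matrix m m ℂ) :
    Φ X = ∑ j, ∑ k, X j k • Φ (Matrix.single j k 1) := by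
  conv_lhs => rw [matrix_eq_sum_single X]
  rw [map_sum]
  refine Finset.sum_congr rfl fun j _ => ?_
  rw [map_sum]
  refine Finset.sum_congr rfl fun k _ => ?_
  rw [← _root_.map_smul, smul_single, smul_eq_mul, mul_one]

lemma kraus (Φ : Matrix m m ℂ →ₗ[ℂ] Matrix m' m' ℂ) (h : IsCPMap Φ) :
    ∃ U : (m × m') → Matrix m' m ℂ, ∀ X, Φ X = ∑ t, U t * X * (U t)ᴴ := by
  obtain ⟨B, hB⟩ := psd_exists_eq h
  refine ⟨fun t => Matrix.of fun a j => star (B t (j, a)), fun X => ?_⟩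
  ext a b
  have hc : ∀ j k : m, Φ (Matrix.single j k 1) a b
      = ∑ t, star (B t (j, a)) * B t (k, b) := by
    intro j k
    rw [← choi_apply Φ j k a b, hB]
    simp only [Matrix.mul_apply, conjTranspose_apply]
  rw [map_eq_sum Φ X]
  simp only [Matrix.sum_apply, Matrix.smul_apply, smul_eq_mul, hc, Matrix.mul_apply,
    conjTranspose_apply, star_star, Finset.mul_sum, Finset.sum_mul, Matrix.of_apply]
  rw [show (∑ j, ∑ k, ∑ t, X j k * (star (B t (j, a)) * B t (k, b)))
      = ∑ j, ∑ t, ∑ k, X j k * (star (B t (j, a)) * B t (k, b)) from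
    Finset.sum_congr rfl fun j _ => Finset.sum_comm, Finset.sum_comm]
  refine Finset.sum_congr rfl fun t _ => ?_
  rw [Finset.sum_comm]
  refine Finset.sum_congr rfl fun k _ => Finset.sum_congr rfl fun j _ => by ring
end CPH

open Frob CPH


namespace Aux
open Frob CPH

variable {m n m' : Type*} [Fintype m] [Fintype n] [Fintype m']

lemma toE_sum {ι : Type*} (s : Finset ι) (f : ι → Matrix m n ℂ) :
    toE (∑ x ∈ s, f x) = ∑ x ∈ s, toE (f x) := by
  ext p
  simp only [toE, Matrix.sum_apply]
  rw [WithLp.ofLp_sum, Finset.sum_apply]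

lemma frob_sum_le {ι : Type*} (s : Finset ι) (f : ι → Matrix m n ℂ) :
    frob (∑ x ∈ s, f x) ≤ ∑ x ∈ s, frob (f x) := by
  rw [frob_eq, toE_sum]
  refine (norm_sum_le _ _).trans (le_of_eq ?_)
  exact Finset.sum_congr rfl fun x _ => (frob_eq (f x)).symm

lemma entry_le_frob (A : Matrix m n ℂ) (i : m) (j : n) : ‖A i j‖ ≤ frob A := by
  rw [frob_eq, EuclideanSpace.norm_eq]
  have h : ‖A i j‖ = Real.sqrt (‖toE A (i, j)‖ ^ 2) := by
    rw [Real.sqrt_sq (norm_nonneg _)]; rfl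
  rw [h]
  exact Real.sqrt_le_sqrt (Finset.single_le_sum (f := fun p => ‖toE A p‖ ^ 2)
    (fun _ _ => sq_nonneg _) (Finset.mem_univ (i, j)))

lemma conjTranspose_kron (A : Matrix m n ℂ) (B : Matrix m' m' ℂ) :
    (A ⊗ₖ B)ᴴ = Aᴴ ⊗ₖ Bᴴ := by
  ext ⟨i, a⟩ ⟨j, b⟩
  simp [conjTranspose_apply, kroneckerMap_apply, mul_comm]

lemma psd_kron {A : Matrix m m ℂ} {B : Matrix m' m' ℂ}
    (hA : A.PosSemidef) (hB : B.PosSemidef) : (A ⊗ₖ B).PosSemidef := by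
  obtain ⟨S, rfl⟩ := psd_exists_eq hA
  obtain ⟨T, rfl⟩ := psd_exists_eq hB
  have : (Sᴴ * S) ⊗ₖ (Tᴴ * T) = (S ⊗ₖ T)ᴴ * (S ⊗ₖ T) := by
    rw [conjTranspose_kron, ← Matrix.mul_kronecker_mul]
  rw [this]
  exact posSemidef_conjTranspose_mul_self _

lemma frob_le_trace {A : Matrix m m ℂ} (h : A.PosSemidef) : frob A ≤ A.trace.re := by
  obtain ⟨S, rfl⟩ := psd_exists_eq h
  set col : m → Matrix m (Fin 1) ℂ := fun i => Matrix.of fun r _ => S r i with hcol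
  have htr : ∀ i j : m, (Sᴴ * S) i j = ((col i)ᴴ * col j).trace := by
    intro i j
    rw [Matrix.trace_fin_one]
    simp [Matrix.mul_apply, conjTranspose_apply, hcol]
  have hij : ∀ i j : m, ‖(Sᴴ * S) i j‖ ≤ frob (col i) * frob (col j) := by
    intro i j; rw [htr]; exact cs _ _
  have hii : ∀ i : m, ((Sᴴ * S) i i).re = frob (col i) ^ 2 := by
    intro i; rw [htr, inn_self, Complex.ofReal_re]
  have htrace : (Sᴴ * S).trace.re = ∑ i, frob (col i) ^ 2 := by
    rw [Matrix.trace, Complex.re_sum]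
    exact Finset.sum_congr rfl fun i _ => hii i
  have hfr : frob (Sᴴ * S) ≤ Real.sqrt ((∑ i, frob (col i) ^ 2) ^ 2) := by
    rw [frob_eq, EuclideanSpace.norm_eq]
    apply Real.sqrt_le_sqrt
    have expand : (∑ i, frob (col i) ^ 2) ^ 2
        = ∑ p : m × m, (frob (col p.1) * frob (col p.2)) ^ 2 := by
      rw [sq, Finset.sum_mul_sum, ← Finset.sum_product']
      refine Finset.sum_congr rfl fun p _ => by ring
    rw [expand]
    refine Finset.sum_le_sum fun p _ => ?_
    have : ‖toE (Sᴴ * S) p‖ = ‖(Sᴴ * S) p.1 p.2‖ := rfl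
    rw [this]
    exact pow_le_pow_left₀ (norm_nonneg _) (hij p.1 p.2) 2
  rw [htrace]
  refine hfr.trans (le_of_eq ?_)
  exact Real.sqrt_sq (Finset.sum_nonneg fun i _ => sq_nonneg _)

lemma nu2_nonneg (Φ : Matrix m m ℂ →ₗ[ℂ] Matrix m' m' ℂ) : 0 ≤ nu2 Φ :=
  Real.sSup_nonneg (by rintro x ⟨ρ, _, _, rfl⟩; exact frob_nonneg _)

variable [DecidableEq m]

lemma nu2_elt_le (Φ : Matrix m m ℂ →ₗ[ℂ] Matrix m' m' ℂ) {r : ℝ}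
    (hr : r ∈ {r | ∃ ρ : Matrix m m ℂ, ρ.PosSemidef ∧ ρ.trace = 1 ∧ r = frob (Φ ρ)}) :
    r ≤ ∑ j : m, ∑ k : m, frob (Φ (Matrix.single j k 1)) := by
  obtain ⟨ρ, hρ, htr, rfl⟩ := hr
  have hρ1 : frob ρ ≤ 1 := by
    have := frob_le_trace hρ
    rw [htr] at this; simpa using this
  rw [map_eq_sum Φ ρ]
  refine (frob_sum_le _ _).trans ?_
  refine Finset.sum_le_sum fun j _ => (frob_sum_le _ _).trans ?_
  refine Finset.sum_le_sum fun k _ => ?_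
  rw [frob_smul]
  calc ‖ρ j k‖ * frob (Φ (Matrix.single j k 1))
      ≤ 1 * frob (Φ (Matrix.single j k 1)) := by
        apply mul_le_mul_of_nonneg_right _ (frob_nonneg _)
        exact (entry_le_frob ρ j k).trans hρ1
    _ = _ := one_mul _

lemma nu2_bdd (Φ : Matrix m m ℂ →ₗ[ℂ] Matrix m' m' ℂ) :
    BddAbove {r | ∃ ρ : Matrix m m ℂ, ρ.PosSemidef ∧ ρ.trace = 1 ∧ r = frob (Φ ρ)} :=
  ⟨_, fun _ hr => nu2_elt_le Φ hr⟩

lemma frob_eq_zero {A : Matrix m n ℂ} (h : frob A = 0) : A = 0 := by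
  rw [frob_eq, norm_eq_zero] at h
  ext i j
  have : toE A (i, j) = 0 := by rw [h]; rfl
  simpa [toE] using this

lemma psd_trace_re {A : Matrix m m ℂ} (h : A.PosSemidef) :
    A.trace = ((A.trace.re : ℝ) : ℂ) ∧ 0 ≤ A.trace.re := by
  obtain ⟨S, rfl⟩ := psd_exists_eq h
  rw [inn_self]
  constructor <;> simp [← Complex.ofReal_pow, sq_nonneg]

lemma cp_bound (Ω : Matrix m m ℂ →ₗ[ℂ] Matrix m' m' ℂ) {ρ : Matrix m m ℂ}
    (hρ : ρ.PosSemidef) : frob (Ω ρ) ≤ nu2 Ω * ρ.trace.re := by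
  obtain ⟨htr, hre⟩ := psd_trace_re hρ
  set t := ρ.trace.re with ht
  rcases eq_or_lt_of_le hre with h0 | hpos
  · -- t = 0, so ρ = 0
    have : frob ρ = 0 := by
      have h1 := frob_le_trace hρ
      have h2 := frob_nonneg ρ
      rw [← ht, ← h0] at h1
      linarith
    have hρ0 : ρ = 0 := frob_eq_zero this
    rw [hρ0, map_zero, ← h0, mul_zero]
    have : frob (0 : Matrix m' m' ℂ) = 0 := by
      rw [frob_eq, norm_eq_zero]; rfl
    rw [this]
  · have hmem : frob (Ω (((t⁻¹ : ℝ) : ℂ) • ρ)) ∈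
        {r | ∃ σ : Matrix m m ℂ, σ.PosSemidef ∧ σ.trace = 1 ∧ r = frob (Ω σ)} := by
      refine ⟨_, psd_smul hρ (by positivity), ?_, rfl⟩
      rw [Matrix.trace_smul, htr, smul_eq_mul, ← Complex.ofReal_mul,
        inv_mul_cancel₀ (ne_of_gt hpos), Complex.ofReal_one]
    have hle : frob (Ω (((t⁻¹ : ℝ) : ℂ) • ρ)) ≤ nu2 Ω := le_csSup (nu2_bdd Ω) hmem
    rw [_root_.map_smul, frob_smul] at hle
    have hn : ‖((t⁻¹ : ℝ) : ℂ)‖ = t⁻¹ := by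
      rw [Complex.norm_real, Real.norm_eq_abs, abs_of_nonneg (by positivity)]
    rw [hn] at hle
    calc frob (Ω ρ) = t * (t⁻¹ * frob (Ω ρ)) := by
          field_simp
      _ ≤ t * nu2 Ω := by
          apply mul_le_mul_of_nonneg_left hle (le_of_lt hpos)
      _ = nu2 Ω * t := mul_comm _ _

lemma le_of_sq_le (a b : ℝ) (ha : 0 ≤ a) (hb : 0 ≤ b) (h : a ^ 2 ≤ b ^ 2) : a ≤ b := by
  nlinarith

lemma gram {ι : Type*} (s : Finset ι) (F : ι → Matrix m n ℂ) :
    ((∑ x ∈ s, F x)ᴴ * (∑ x ∈ s, F x)).trace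
      = ∑ x ∈ s, ∑ y ∈ s, ((F x)ᴴ * F y).trace := by
  rw [conjTranspose_sum, Matrix.sum_mul, trace_sum]
  refine Finset.sum_congr rfl fun x _ => ?_
  rw [Matrix.mul_sum, trace_sum]

lemma kron_decomp {n' : Type*} [Fintype n'] (ρ : Matrix (m × n') (m × n') ℂ) :
    ρ = ∑ p : m × m, Matrix.single p.1 p.2 (1 : ℂ) ⊗ₖ
      (Matrix.of fun a b => ρ (p.1, a) (p.2, b)) := by
  ext ⟨i, a⟩ ⟨j, b⟩
  rw [Matrix.sum_apply, Finset.sum_eq_single (i, j)]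
  · simp [kroneckerMap_apply, Matrix.single]
  · rintro ⟨i', j'⟩ _ hne
    simp only [kroneckerMap_apply]
    by_cases h1 : i' = i ∧ j' = j
    · exact absurd (Prod.ext h1.1 h1.2) hne
    · rw [Matrix.single_apply_of_ne (h := h1), zero_mul]
  · simp

end Aux

open Aux


open Frob CPH Aux in
lemma upper_bound {d d' e e' : ℕ}
    (Φ : Matrix (Fin d) (Fin d) ℂ →ₗ[ℂ] Matrix (Fin d') (Fin d') ℂ)
    (Ω : Matrix (Fin e) (Fin e) ℂ →ₗ[ℂ] Matrix (Fin e') (Fin e') ℂ)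
    (hΩ : IsCPMap Ω)
    (hpos : ∀ i j k l : Fin d,
      0 ≤ ((Φ (Matrix.single i k 1))ᴴ * Φ (Matrix.single j l 1)).trace)
    (Ψ : Matrix (Fin d × Fin e) (Fin d × Fin e) ℂ →ₗ[ℂ]
        Matrix (Fin d' × Fin e') (Fin d' × Fin e') ℂ)
    (hΨ : ∀ (A : Matrix (Fin d) (Fin d) ℂ) (B : Matrix (Fin e) (Fin e) ℂ),
      Ψ (A ⊗ₖ B) = Φ A ⊗ₖ Ω B)
    (ρ : Matrix (Fin d × Fin e) (Fin d × Fin e) ℂ) (hρ : ρ.PosSemidef)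
    (htr : ρ.trace = 1) :
    frob (Ψ ρ) ≤ nu2 Φ * nu2 Ω := by
  obtain ⟨U, hU⟩ := kraus Ω hΩ
  obtain ⟨S, hS⟩ := psd_exists_eq hρ
  set blk : Fin d × Fin d → Matrix (Fin e) (Fin e) ℂ :=
    fun p => Matrix.of fun a b => ρ (p.1, a) (p.2, b) with hblk
  set Sb : Fin d → Matrix (Fin d × Fin e) (Fin e) ℂ :=
    fun k => Matrix.of fun r a => S r (k, a) with hSb
  have hblkmul : ∀ p : Fin d × Fin d, blk p = (Sb p.1)ᴴ * Sb p.2 := by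
    intro p; ext a b
    simp only [hblk, hSb, hS, Matrix.mul_apply, conjTranspose_apply, Matrix.of_apply]
  set C : Fin d → Matrix ((Fin e × Fin e') × (Fin d × Fin e)) (Fin e') ℂ :=
    fun k => Matrix.of fun x b => (Sb k * (U x.1)ᴴ) x.2 b with hC
  have hΩblk : ∀ p : Fin d × Fin d, Ω (blk p) = (C p.1)ᴴ * C p.2 := by
    intro p
    have step1 : ∀ t, U t * ((Sb p.1)ᴴ * Sb p.2) * (U t)ᴴ
        = (Sb p.1 * (U t)ᴴ)ᴴ * (Sb p.2 * (U t)ᴴ) := by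
      intro t
      rw [conjTranspose_mul, conjTranspose_conjTranspose]
      simp only [Matrix.mul_assoc]
    rw [hblkmul, hU]
    simp only [step1]
    ext a b
    rw [Matrix.sum_apply]
    simp only [Matrix.mul_apply, conjTranspose_apply, hC, Matrix.of_apply,
      Fintype.sum_prod_type]
  set t : Fin d → ℝ := fun i => frob (Sb i) ^ 2 with ht
  have hdiag : ∀ i, (blk (i, i)).trace = ((t i : ℝ) : ℂ) := by
    intro i; rw [hblkmul]; exact inn_self _
  have hsumt : ∑ i, t i = 1 := by
    have h1 : ρ.trace = ∑ i, ((t i : ℝ) : ℂ) := by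
      rw [Matrix.trace, Fintype.sum_prod_type]
      refine Finset.sum_congr rfl fun i _ => ?_
      rw [← hdiag i, Matrix.trace]
      rfl
    rw [htr] at h1
    exact_mod_cast h1.symm
  have htnn : ∀ i, 0 ≤ t i := fun i => sq_nonneg _
  set u : Fin d → ℝ := fun i => Real.sqrt (t i) with hu
  have hunn : ∀ i, 0 ≤ u i := fun i => Real.sqrt_nonneg _
  have huu : ∀ i, u i * u i = t i := fun i => Real.mul_self_sqrt (htnn i)
  have hΩnn := nu2_nonneg Ω
  -- per-block bound
  have hb1 : ∀ p : Fin d × Fin d,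
      frob (Ω (blk p)) ≤ nu2 Ω * (u p.1 * u p.2) := by
    intro p
    have hcp : ∀ i, frob (Ω (blk (i, i))) ≤ nu2 Ω * t i := by
      intro i
      have hpsd : (blk (i, i)).PosSemidef := by
        rw [hblkmul]; exact posSemidef_conjTranspose_mul_self _
      have h2 := cp_bound Ω hpsd
      rwa [hdiag i, Complex.ofReal_re] at h2
    have k1 : frob (Ω (blk p)) ^ 2
        ≤ frob (Ω (blk (p.1, p.1))) * frob (Ω (blk (p.2, p.2))) := by
      rw [hΩblk p, hΩblk (p.1, p.1), hΩblk (p.2, p.2)]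
      exact key (C p.1) (C p.2)
    refine le_of_sq_le _ _ (frob_nonneg _)
      (by positivity) ?_
    calc frob (Ω (blk p)) ^ 2
        ≤ frob (Ω (blk (p.1, p.1))) * frob (Ω (blk (p.2, p.2))) := k1
      _ ≤ (nu2 Ω * t p.1) * (nu2 Ω * t p.2) :=
          mul_le_mul (hcp p.1) (hcp p.2) (frob_nonneg _)
            (by positivity)
      _ = (nu2 Ω * (u p.1 * u p.2)) ^ 2 := by
          rw [← huu p.1, ← huu p.2]; ring
  -- the comparison state σ
  set σ : Matrix (Fin d) (Fin d) ℂ := Matrix.of fun i k => ((u i * u k : ℝ) : ℂ) with hσ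
  have hσpsd : σ.PosSemidef := by
    have : σ = (Matrix.of fun (_ : Fin 1) i => ((u i : ℝ) : ℂ))ᴴ
        * (Matrix.of fun (_ : Fin 1) i => ((u i : ℝ) : ℂ)) := by
      ext i k
      simp [hσ, Matrix.mul_apply, conjTranspose_apply, Complex.star_def,
        Complex.conj_ofReal]
    rw [this]; exact posSemidef_conjTranspose_mul_self _
  have hσtr : σ.trace = 1 := by
    rw [Matrix.trace]
    have : ∀ i : Fin d, σ.diag i = ((t i : ℝ) : ℂ) := by
      intro i
      show ((u i * u i : ℝ) : ℂ) = _
      rw [huu i]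
    rw [Finset.sum_congr rfl fun i _ => this i]
    rw [← Complex.ofReal_sum, hsumt, Complex.ofReal_one]
  have hσle : frob (Φ σ) ≤ nu2 Φ := le_csSup (nu2_bdd Φ) ⟨σ, hσpsd, hσtr, rfl⟩
  -- expansion of Ψ ρ
  have hdecomp : Ψ ρ = ∑ p : Fin d × Fin d, Φ (Matrix.single p.1 p.2 1) ⊗ₖ Ω (blk p) := by
    conv_lhs => rw [kron_decomp ρ]
    rw [map_sum]
    exact Finset.sum_congr rfl fun p _ => hΨ _ _
  set M : Fin d × Fin d → Fin d × Fin d → ℂ := fun p q =>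
    ((Φ (Matrix.single p.1 p.2 1))ᴴ * Φ (Matrix.single q.1 q.2 1)).trace with hM
  have hMre : ∀ p q, M p q = (((M p q).re : ℝ) : ℂ) :=
    fun p q => nonneg_re (hpos p.1 q.1 p.2 q.2)
  have hMnn : ∀ p q, 0 ≤ (M p q).re := fun p q => nonneg_re' (hpos p.1 q.1 p.2 q.2)
  have expand : frob (Ψ ρ) ^ 2
      = ∑ p, ∑ q, (M p q * ((Ω (blk p))ᴴ * Ω (blk q)).trace).re := by
    rw [frob_sq, hdecomp, Aux.gram, Complex.re_sum]
    refine Finset.sum_congr rfl fun p _ => ?_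
    rw [Complex.re_sum]
    refine Finset.sum_congr rfl fun q _ => ?_
    rw [inn_kron]
  have expand2 : frob (Φ σ) ^ 2
      = ∑ p : Fin d × Fin d, ∑ q : Fin d × Fin d,
        ((u p.1 * u p.2) * (u q.1 * u q.2)) * (M p q).re := by
    have hσsum : Φ σ = ∑ p : Fin d × Fin d, σ p.1 p.2 • Φ (Matrix.single p.1 p.2 1) := by
      rw [map_eq_sum Φ σ]
      exact (Fintype.sum_prod_type (f := fun p : Fin d × Fin d =>
        σ p.1 p.2 • Φ (Matrix.single p.1 p.2 1))).symm
    rw [frob_sq, hσsum, Aux.gram, Complex.re_sum]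
    refine Finset.sum_congr rfl fun p _ => ?_
    rw [Complex.re_sum]
    refine Finset.sum_congr rfl fun q _ => ?_
    rw [conjTranspose_smul, Matrix.smul_mul, Matrix.mul_smul, Matrix.trace_smul,
      Matrix.trace_smul]
    have hσval : ∀ r : Fin d × Fin d, σ r.1 r.2 = ((u r.1 * u r.2 : ℝ) : ℂ) := fun r => rfl
    rw [hσval p, hσval q]
    rw [Complex.star_def, Complex.conj_ofReal]
    rw [smul_eq_mul, smul_eq_mul, ← mul_assoc]
    rw [← Complex.ofReal_mul]
    exact Complex.re_ofReal_mul _ _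
  have chain : frob (Ψ ρ) ^ 2 ≤ nu2 Ω ^ 2 * frob (Φ σ) ^ 2 := by
    rw [expand, expand2, Finset.mul_sum]
    refine Finset.sum_le_sum fun p _ => ?_
    rw [Finset.mul_sum]
    refine Finset.sum_le_sum fun q _ => ?_
    have hW : ‖((Ω (blk p))ᴴ * Ω (blk q)).trace‖
        ≤ (nu2 Ω * (u p.1 * u p.2)) * (nu2 Ω * (u q.1 * u q.2)) := by
      refine (cs _ _).trans ?_
      exact mul_le_mul (hb1 p) (hb1 q) (frob_nonneg _) (by positivity)
    have hre : (M p q * ((Ω (blk p))ᴴ * Ω (blk q)).trace).re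
        = (M p q).re * ((Ω (blk p))ᴴ * Ω (blk q)).trace.re := by
      rw [hMre p q, Complex.re_ofReal_mul, Complex.ofReal_re]
    rw [hre]
    calc (M p q).re * ((Ω (blk p))ᴴ * Ω (blk q)).trace.re
        ≤ (M p q).re * (((nu2 Ω * (u p.1 * u p.2)) * (nu2 Ω * (u q.1 * u q.2)))) := by
          refine mul_le_mul_of_nonneg_left ?_ (hMnn p q)
          exact (Complex.re_le_norm _).trans hW
      _ = nu2 Ω ^ 2 * ((u p.1 * u p.2) * (u q.1 * u q.2) * (M p q).re) := by ring
  have hfin : frob (Ψ ρ) ^ 2 ≤ (nu2 Φ * nu2 Ω) ^ 2 := by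
    refine chain.trans ?_
    have h1 : frob (Φ σ) ^ 2 ≤ nu2 Φ ^ 2 := by
      have := mul_le_mul hσle hσle (frob_nonneg _) (nu2_nonneg Φ)
      simpa [sq] using this
    calc nu2 Ω ^ 2 * frob (Φ σ) ^ 2 ≤ nu2 Ω ^ 2 * nu2 Φ ^ 2 :=
          mul_le_mul_of_nonneg_left h1 (by positivity)
      _ = (nu2 Φ * nu2 Ω) ^ 2 := by ring
  exact le_of_sq_le _ _ (frob_nonneg _)
    (mul_nonneg (nu2_nonneg Φ) (nu2_nonneg Ω)) hfin

/-- Main theorem: if Φ, Ω are completely positive and Tr Φ(E_{ik})† Φ(E_{jℓ}) ≥ 0 for all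
indices (a nonnegative real number, in the complex order), then ν₂ is multiplicative:
ν₂(Φ ⊗ Ω) = ν₂(Φ) ν₂(Ω). -/
theorem stmt5 {d d' e e' : ℕ}
    (Φ : Matrix (Fin d) (Fin d) ℂ →ₗ[ℂ] Matrix (Fin d') (Fin d') ℂ)
    (Ω : Matrix (Fin e) (Fin e) ℂ →ₗ[ℂ] Matrix (Fin e') (Fin e') ℂ)
    (hΦ : IsCPMap Φ) (hΩ : IsCPMap Ω)
    (hpos : ∀ i j k l : Fin d,
      0 ≤ ((Φ (single i k 1))ᴴ * Φ (single j l 1)).trace)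
    (Ψ : Matrix (Fin d × Fin e) (Fin d × Fin e) ℂ →ₗ[ℂ]
        Matrix (Fin d' × Fin e') (Fin d' × Fin e') ℂ)
    (hΨ : ∀ (A : Matrix (Fin d) (Fin d) ℂ) (B : Matrix (Fin e) (Fin e) ℂ),
      Ψ (A ⊗ₖ B) = Φ A ⊗ₖ Ω B) :
    nu2 Ψ = nu2 Φ * nu2 Ω := by
  have hΦn := nu2_nonneg Φ
  have hΩn := nu2_nonneg Ω
  have hΨn := nu2_nonneg Ψ
  have hub : ∀ r ∈ {r | ∃ ρ : Matrix (Fin d × Fin e) (Fin d × Fin e) ℂ,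
      ρ.PosSemidef ∧ ρ.trace = 1 ∧ r = frob (Ψ ρ)}, r ≤ nu2 Φ * nu2 Ω := by
    rintro r ⟨ρ, hρ, htr, rfl⟩
    exact upper_bound Φ Ω hΩ hpos Ψ hΨ ρ hρ htr
  have hbdd : BddAbove {r | ∃ ρ : Matrix (Fin d × Fin e) (Fin d × Fin e) ℂ,
      ρ.PosSemidef ∧ ρ.trace = 1 ∧ r = frob (Ψ ρ)} := ⟨_, hub⟩
  refine le_antisymm (Real.sSup_le hub (mul_nonneg hΦn hΩn)) ?_
  have hprod : ∀ (ρ : Matrix (Fin d) (Fin d) ℂ) (σ : Matrix (Fin e) (Fin e) ℂ),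
      ρ.PosSemidef → ρ.trace = 1 → σ.PosSemidef → σ.trace = 1 →
      frob (Φ ρ) * frob (Ω σ) ≤ nu2 Ψ := by
    intro ρ σ h1 h2 h3 h4
    have hmem : frob (Φ ρ) * frob (Ω σ) ∈ {r | ∃ τ : Matrix (Fin d × Fin e) (Fin d × Fin e) ℂ,
        τ.PosSemidef ∧ τ.trace = 1 ∧ r = frob (Ψ τ)} :=
      ⟨ρ ⊗ₖ σ, psd_kron h1 h3, by rw [Matrix.trace_kronecker, h2, h4, mul_one],
        by rw [hΨ, frob_kron]⟩
    exact le_csSup hbdd hmem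
  by_cases hΩ0 : nu2 Ω = 0
  · rw [hΩ0, mul_zero]; exact hΨn
  · have hΩpos : 0 < nu2 Ω := lt_of_le_of_ne hΩn (Ne.symm hΩ0)
    have h1 : ∀ r ∈ {r | ∃ ρ : Matrix (Fin d) (Fin d) ℂ,
        ρ.PosSemidef ∧ ρ.trace = 1 ∧ r = frob (Φ ρ)}, r ≤ nu2 Ψ / nu2 Ω := by
      rintro r ⟨ρ, hρ, htrρ, rfl⟩
      rw [le_div_iff₀ hΩpos]
      by_cases hf : frob (Φ ρ) = 0
      · rw [hf, zero_mul]; exact hΨn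
      · have hfpos : 0 < frob (Φ ρ) := lt_of_le_of_ne (frob_nonneg _) (Ne.symm hf)
        rw [mul_comm, ← le_div_iff₀ hfpos]
        refine Real.sSup_le ?_ (div_nonneg hΨn hfpos.le)
        rintro s ⟨σ, hσ, htrσ, rfl⟩
        rw [le_div_iff₀ hfpos, mul_comm]
        exact hprod ρ σ hρ htrρ hσ htrσ
    have h2 : nu2 Φ ≤ nu2 Ψ / nu2 Ω := Real.sSup_le h1 (div_nonneg hΨn hΩn)
    calc nu2 Φ * nu2 Ω ≤ (nu2 Ψ / nu2 Ω) * nu2 Ω := mul_le_mul_of_nonneg_right h2 hΩn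
      _ = nu2 Ψ := div_mul_cancel₀ _ hΩ0
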